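/- Let Q be an m×m matrix admitting the eigendecomposition Q = V Λ Uᵀ, where Λ = diag(λ₁,…,λ_m) has pairwise distinct entries and Uᵀ = V⁻¹. Then for any m×m matrix M and any real Δ, the directional derivative series of the matrix exponential satisfies Σ_{n=1}^∞ (Δⁿ/n!) Σ_{j=0}^{n−1} Q^j M Q^{n−1−j} = V ( (Uᵀ M V) ∘ X(Λ,Δ) ) Uᵀ, where ∘ is the Hadamard product and X(Λ,Δ) is the matrix with X_{ii} = Δ·e^{Δλ_i} and X_{ij} = (e^{Δλ_i} − e^{Δλ_j})/(λ_i − λ_j) for i ≠ j. In particular, ∂T(Δ)/∂θ_u = V((Uᵀ(∂Q/∂θ_u)V) ∘ X(Λ,Δ))Uᵀ for T(Δ) = exp(ΔQ). -/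

import Mathlib

attribute [local instance] Matrix.linftyOpNormedRing Matrix.linftyOpNormedAlgebra

/-!
Conjugating by `V` turns `Qʲ M Q^(n-1-j)` into `V (diag λʲ N diag λ^(n-1-j)) Uᵀ` with
`N = Uᵀ M V`, whose `(i, k)` entry is `N i k * λᵢʲ λₖ^(n-1-j)`. Summing over `j` gives the
geometric sum `(λᵢⁿ - λₖⁿ) / (λᵢ - λₖ)` (or `n λᵢ^(n-1)` on the diagonal), and the weighted
series over `n` is the divided difference of `t ↦ exp (Δ t)` at `λᵢ, λₖ`. The derivative is
obtained by differentiating the exponential series of `Δ (Q + θ M)` term by term, which the bound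
`‖∑ⱼ Bʲ M B^(n-1-j)‖ ≤ n ‖B‖^(n-1) ‖M‖` justifies.
-/

open Finset Matrix

theorem hasSum_pow_div_factorial_mul_nat_mul_pow_pred (Δ x : ℝ) :
    HasSum (fun n : ℕ => Δ ^ n / n.factorial * (n * x ^ (n - 1))) (Δ * Real.exp (Δ * x)) := by
  rw [← hasSum_nat_add_iff' 1, sum_range_one, Nat.cast_zero, zero_mul, mul_zero, sub_zero]
  have h := (NormedSpace.expSeries_div_hasSum_exp (Δ * x)).mul_left Δ
  rw [← Real.exp_eq_exp_ℝ] at h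
  refine h.congr_fun fun n => ?_
  rw [Nat.factorial_succ]
  push_cast
  field_simp
  ring

noncomputable def expDivDiff (Δ x y : ℝ) : ℝ :=
  if x = y then Δ * Real.exp (Δ * x) else (Real.exp (Δ * x) - Real.exp (Δ * y)) / (x - y)

theorem hasSum_pow_div_factorial_mul_geom_sum₂_of_ne (Δ : ℝ) {x y : ℝ} (hxy : x ≠ y) :
    HasSum (fun n : ℕ => Δ ^ n / n.factorial * ∑ j ∈ range n, x ^ j * y ^ (n - 1 - j))
      ((Real.exp (Δ * x) - Real.exp (Δ * y)) / (x - y)) := by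
  have h := ((NormedSpace.expSeries_div_hasSum_exp (Δ * x)).sub
    (NormedSpace.expSeries_div_hasSum_exp (Δ * y))).div_const (x - y)
  rw [← Real.exp_eq_exp_ℝ] at h
  refine h.congr_fun fun n => ?_
  rw [eq_div_iff (sub_ne_zero.2 hxy), mul_assoc, geom_sum₂_mul, mul_pow, mul_pow]
  ring

theorem hasSum_expDivDiff (Δ x y : ℝ) :
    HasSum (fun n : ℕ => Δ ^ n / n.factorial * ∑ j ∈ range n, x ^ j * y ^ (n - 1 - j))
      (expDivDiff Δ x y) := by
  unfold expDivDiff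
  split_ifs with hxy
  · subst hxy
    simpa only [geom_sum₂_self] using hasSum_pow_div_factorial_mul_nat_mul_pow_pred Δ x
  · exact hasSum_pow_div_factorial_mul_geom_sum₂_of_ne Δ hxy

theorem sum_conj_pow_mul_mul_pow {R : Type*} [Semiring R] {V W : R} (hVW : V * W = 1)
    (hWV : W * V = 1) (D M : R) (n : ℕ) :
    ∑ j ∈ range n, (V * D * W) ^ j * M * (V * D * W) ^ (n - 1 - j) =
      V * (∑ j ∈ range n, D ^ j * (W * M * V) * D ^ (n - 1 - j)) * W := by
  have hpow (k : ℕ) : (V * D * W) ^ k = V * D ^ k * W := Units.conj_pow ⟨V, W, hVW, hWV⟩ D k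
  simp only [hpow, mul_sum, sum_mul]
  simp only [mul_assoc]

theorem Matrix.sum_diagonal_pow_mul_mul_diagonal_pow {ι R : Type*} [Fintype ι] [DecidableEq ι]
    [CommSemiring R] (d : ι → R) (N : Matrix ι ι R) (n : ℕ) :
    ∑ j ∈ range n, diagonal d ^ j * N * diagonal d ^ (n - 1 - j) =
      N ⊙ of fun i k => ∑ j ∈ range n, d i ^ j * d k ^ (n - 1 - j) := by
  ext i k
  simp only [diagonal_pow, sum_apply, diagonal_mul, mul_diagonal, hadamard_apply, of_apply,
    mul_sum, Pi.pow_apply]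
  exact sum_congr rfl fun j _ => by ring

theorem hasSum_sum_conj_diagonal_pow_mul_mul_pow {ι : Type*} [Fintype ι] [DecidableEq ι]
    {V W : Matrix ι ι ℝ} (hVW : V * W = 1) (hWV : W * V = 1) (d : ι → ℝ) (M : Matrix ι ι ℝ)
    (Δ : ℝ) :
    HasSum (fun n : ℕ => (Δ ^ n / n.factorial) • ∑ j ∈ range n,
        (V * diagonal d * W) ^ j * M * (V * diagonal d * W) ^ (n - 1 - j))
      (V * (W * M * V) ⊙ (of fun i k => expDivDiff Δ (d i) (d k)) * W) := by
  have hentry : HasSum (fun n : ℕ => (W * M * V) ⊙ of fun i k =>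
        Δ ^ n / n.factorial * ∑ j ∈ range n, d i ^ j * d k ^ (n - 1 - j))
      ((W * M * V) ⊙ of fun i k => expDivDiff Δ (d i) (d k)) :=
    Pi.hasSum.2 fun i => Pi.hasSum.2 fun k => (hasSum_expDivDiff Δ (d i) (d k)).mul_left _
  refine ((hentry.mul_left V).mul_right W).congr_fun fun n => ?_
  rw [sum_conj_pow_mul_mul_pow hVW hWV, sum_diagonal_pow_mul_mul_diagonal_pow, ← smul_mul_assoc,
    ← mul_smul_comm, ← hadamard_smul]
  rfl

section NormedRing

variable {𝔸 : Type*} [NormedRing 𝔸]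

theorem norm_pow_mul_le (a b : 𝔸) : ∀ j : ℕ, ‖a ^ j * b‖ ≤ ‖a‖ ^ j * ‖b‖
  | 0 => by simp
  | j + 1 => by
    rw [pow_succ', mul_assoc, pow_succ', mul_assoc]
    exact (norm_mul_le _ _).trans
      (mul_le_mul_of_nonneg_left (norm_pow_mul_le a b j) (norm_nonneg a))

theorem norm_mul_pow_le (a b : 𝔸) : ∀ k : ℕ, ‖b * a ^ k‖ ≤ ‖b‖ * ‖a‖ ^ k
  | 0 => by simp
  | k + 1 => by
    rw [pow_succ, ← mul_assoc, pow_succ, ← mul_assoc]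
    exact (norm_mul_le _ _).trans
      (mul_le_mul_of_nonneg_right (norm_mul_pow_le a b k) (norm_nonneg a))

theorem norm_sum_pow_mul_mul_pow_le (a b : 𝔸) (n : ℕ) :
    ‖∑ j ∈ range n, a ^ j * b * a ^ (n - 1 - j)‖ ≤ n * ‖a‖ ^ (n - 1) * ‖b‖ := by
  have hterm (j : ℕ) (hj : j ∈ range n) :
      ‖a ^ j * b * a ^ (n - 1 - j)‖ ≤ ‖a‖ ^ (n - 1) * ‖b‖ :=
    calc ‖a ^ j * b * a ^ (n - 1 - j)‖ ≤ ‖a‖ ^ j * ‖b‖ * ‖a‖ ^ (n - 1 - j) :=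
          (norm_mul_pow_le _ _ _).trans
            (mul_le_mul_of_nonneg_right (norm_pow_mul_le _ _ _) (by positivity))
      _ = ‖a‖ ^ (n - 1) * ‖b‖ := by
          rw [mul_right_comm, ← pow_add, Nat.add_sub_cancel' (by grind)]
  calc ‖∑ j ∈ range n, a ^ j * b * a ^ (n - 1 - j)‖
      ≤ ∑ j ∈ range n, ‖a ^ j * b * a ^ (n - 1 - j)‖ := norm_sum_le _ _
    _ ≤ ∑ _j ∈ range n, ‖a‖ ^ (n - 1) * ‖b‖ := sum_le_sum hterm
    _ = n * ‖a‖ ^ (n - 1) * ‖b‖ := by rw [sum_const, card_range, nsmul_eq_mul, mul_assoc]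

variable [NormedAlgebra ℝ 𝔸]

theorem hasDerivAt_add_smul_pow (A M : 𝔸) (n : ℕ) (θ : ℝ) :
    HasDerivAt (fun t : ℝ => (A + t • M) ^ n)
      (∑ j ∈ range n, (A + θ • M) ^ j * M * (A + θ • M) ^ (n - 1 - j)) θ := by
  have h := (((hasDerivAt_id θ).smul_const M).const_add A).fun_pow' n
  rw [id, one_smul, ← sum_range_reflect] at h
  refine h.congr_deriv (sum_congr rfl fun j hj => ?_)
  rw [Nat.pred_eq_sub_one, Nat.sub_sub_self (by grind)]

variable [CompleteSpace 𝔸]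

theorem hasDerivAt_exp_smul_add_smul (Δ : ℝ) (A M : 𝔸) :
    HasDerivAt (fun θ : ℝ => NormedSpace.exp (Δ • (A + θ • M)))
      (∑' n : ℕ, (Δ ^ n / n.factorial) • ∑ j ∈ range n, A ^ j * M * A ^ (n - 1 - j)) 0 := by
  set R := ‖A‖ + ‖M‖
  have hexp : (fun θ : ℝ => NormedSpace.exp (Δ • (A + θ • M))) =
      fun θ => ∑' n : ℕ, (Δ ^ n / n.factorial) • (A + θ • M) ^ n := by
    funext θ
    rw [NormedSpace.exp_eq_tsum ℝ]
    simp only [smul_pow, smul_smul, div_eq_inv_mul]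
  have hbound (n : ℕ) (θ : ℝ) (hθ : θ ∈ Metric.ball (0 : ℝ) 1) :
      ‖(Δ ^ n / n.factorial) • ∑ j ∈ range n, (A + θ • M) ^ j * M * (A + θ • M) ^ (n - 1 - j)‖
        ≤ |Δ| ^ n / n.factorial * (n * R ^ (n - 1)) * ‖M‖ := by
    have hθ : |θ| ≤ 1 := (mem_ball_zero_iff.1 hθ).le
    have hnorm : ‖A + θ • M‖ ≤ R := by
      grw [norm_add_le, norm_smul, Real.norm_eq_abs, hθ, one_mul]
    rw [norm_smul, Real.norm_eq_abs, abs_div, abs_pow, Nat.abs_cast, mul_assoc, mul_assoc]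
    grw [norm_sum_pow_mul_mul_pow_le, hnorm, mul_assoc]
  have hsummable := (hasSum_pow_div_factorial_mul_nat_mul_pow_pred |Δ| R).summable.mul_right ‖M‖
  have hsummable₀ : Summable fun n : ℕ => (Δ ^ n / n.factorial) • (A + (0 : ℝ) • M) ^ n := by
    simpa [smul_pow, smul_smul, div_eq_inv_mul] using
      NormedSpace.expSeries_summable' (𝕂 := ℝ) (Δ • A)
  have h := hasDerivAt_tsum_of_isPreconnected hsummable Metric.isOpen_ball
    (convex_ball (0 : ℝ) 1).isPreconnected
    (fun n θ _ => (hasDerivAt_add_smul_pow A M n θ).const_smul _)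
    hbound (Metric.mem_ball_self one_pos) hsummable₀ (Metric.mem_ball_self one_pos)
  simpa only [hexp, Pi.smul_apply, zero_smul, add_zero] using h

end NormedRing

/-- If `Q = V Λ Uᵀ` with `Λ = diagonal lam` having pairwise distinct entries and
`Uᵀ = V⁻¹` (`V` invertible), then for any `m × m` matrix `M` and real `Δ`, the directional
derivative series of the matrix exponential satisfies
`∑_{n ≥ 1} (Δⁿ/n!) ∑_{j=0}^{n-1} Qʲ M Q^{n-1-j} = V ((Uᵀ M V) ⊙ X(Λ,Δ)) Uᵀ`; in particular
this is the derivative of `θ ↦ exp (Δ (Q + θ M))` at `θ = 0`. -/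
theorem eigendecomposition_exp_derivative_formula (m : ℕ)
    (Q V U : Matrix (Fin m) (Fin m) ℝ) (lam : Fin m → ℝ)
    (hdist : Function.Injective lam)
    (hV : IsUnit V.det)
    (hU : U.transpose = V⁻¹)
    (hQ : Q = V * Matrix.diagonal lam * U.transpose)
    (M : Matrix (Fin m) (Fin m) ℝ) (Δ : ℝ) :
    HasSum (fun n : ℕ => if n = 0 then (0 : Matrix (Fin m) (Fin m) ℝ) else
        (Δ ^ n / (n.factorial : ℝ)) • ∑ j ∈ Finset.range n, Q ^ j * M * Q ^ (n - 1 - j))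
      (V * Matrix.hadamard (U.transpose * M * V) (Matrix.of fun i j =>
        if i = j then Δ * Real.exp (Δ * lam i)
        else (Real.exp (Δ * lam i) - Real.exp (Δ * lam j)) / (lam i - lam j)) * U.transpose) ∧
    HasDerivAt (fun θ : ℝ => NormedSpace.exp (Δ • (Q + θ • M)))
      (V * Matrix.hadamard (U.transpose * M * V) (Matrix.of fun i j =>
        if i = j then Δ * Real.exp (Δ * lam i)
        else (Real.exp (Δ * lam i) - Real.exp (Δ * lam j)) / (lam i - lam j)) * U.transpose)
      0 := by
  have hVU : V * U.transpose = 1 := hU ▸ mul_nonsing_inv V hV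
  have hUV : U.transpose * V = 1 := hU ▸ nonsing_inv_mul V hV
  have hX : (of fun i j => if i = j then Δ * Real.exp (Δ * lam i)
        else (Real.exp (Δ * lam i) - Real.exp (Δ * lam j)) / (lam i - lam j)) =
      of fun i j => expDivDiff Δ (lam i) (lam j) := by
    ext i j
    simp only [of_apply, expDivDiff, hdist.eq_iff]
  have hsum := hasSum_sum_conj_diagonal_pow_mul_mul_pow hVU hUV lam M Δ
  rw [← hQ] at hsum
  have hterm : (fun n : ℕ => if n = 0 then (0 : Matrix (Fin m) (Fin m) ℝ) else
      (Δ ^ n / (n.factorial : ℝ)) • ∑ j ∈ range n, Q ^ j * M * Q ^ (n - 1 - j)) =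
      fun n => (Δ ^ n / (n.factorial : ℝ)) • ∑ j ∈ range n, Q ^ j * M * Q ^ (n - 1 - j) := by
    funext n
    split_ifs with hn <;> simp [hn]
  rw [hterm, hX]
  exact ⟨hsum, hsum.tsum_eq ▸ hasDerivAt_exp_smul_add_smul Δ Q M⟩
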